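/- arXiv:2410.05837 — 7 statements merged into one kernel-verified Lean document; each statement's English description precedes it below -/
import Mathlib

section
/- Let x be a random vector in R^k with density p_x, and let n be an independent Gaussian noise vector with mean zero and covariance Σ_n. Let x̃ = x + n with density p_x̃. Then E[x | x̃] = x̃ + Σ_n ∇ log p_x̃(x̃). -/
/-!
Write `p̃(y) = ∫ φ(y - x) p(x) dx`. The Gaussian `φ` and its gradient `∇φ(v) = -φ(v) Σ⁻¹ v` are
bounded (the quadratic form of `Σ⁻¹` is coercive, so `‖v‖ φ(v)` is bounded), and `p` is
integrable, so one may differentiate under the integral sign: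
`Σ ∇p̃(y) = ∫ φ(y - x) p(x) (x - y) dx = ∫ φ(y - x) p(x) x dx - p̃(y) y`.
Dividing by `p̃(y)`, since `∇ log p̃ = ∇p̃ / p̃`, gives the formula.
-/

open MeasureTheory Real

section Coercive

variable {E : Type*} [NormedAddCommGroup E] [NormedSpace ℝ E] [FiniteDimensional ℝ E]

theorem isCoercive_of_pos (B : E →L[ℝ] E →L[ℝ] ℝ) (hB : ∀ u ≠ 0, 0 < B u u) :
    IsCoercive B := by
  obtain ⟨m, hm, hmin⟩ : ∃ m > 0, ∀ u ∈ Metric.sphere (0 : E) 1, m ≤ B u u := by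
    rcases (Metric.sphere (0 : E) 1).eq_empty_or_nonempty with hempty | hne
    · exact ⟨1, one_pos, by simp [hempty]⟩
    obtain ⟨u₀, hu₀, hmin⟩ := (isCompact_sphere (0 : E) 1).exists_isMinOn hne
      (f := fun u => B u u) (by fun_prop)
    exact ⟨B u₀ u₀, hB u₀ (ne_zero_of_mem_unit_sphere ⟨u₀, hu₀⟩), hmin⟩
  refine ⟨m, hm, fun u => ?_⟩
  rcases eq_or_ne u 0 with rfl | hu
  · simp
  have hnorm : ‖u‖ ≠ 0 := norm_ne_zero_iff.2 hu
  have hunit := hmin (‖u‖⁻¹ • u) (by simp [norm_smul, hnorm])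
  simp only [map_smul, smul_apply, smul_eq_mul] at hunit
  calc m * ‖u‖ * ‖u‖ ≤ ‖u‖⁻¹ * (‖u‖⁻¹ * B u u) * ‖u‖ * ‖u‖ := by gcongr
    _ = B u u := by field_simp

end Coercive

section GaussianKernel

variable {E : Type*} [NormedAddCommGroup E] [InnerProductSpace ℝ E]

noncomputable def gaussianKernel (c : ℝ) (A : E →L[ℝ] E) (v : E) : ℝ :=
  c * exp (-inner ℝ v (A v) / 2)

variable {c : ℝ} {A : E →L[ℝ] E}

theorem continuous_gaussianKernel : Continuous (gaussianKernel c A) := by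
  unfold gaussianKernel; fun_prop

theorem hasGradientAt_gaussianKernel [CompleteSpace E] (hA : (A : E →ₗ[ℝ] E).IsSymmetric)
    (v : E) : HasGradientAt (gaussianKernel c A) (-gaussianKernel c A v • A v) v := by
  have hq : HasFDerivAt (fun w => inner ℝ w (A w)) ((2 : ℝ) • innerSL ℝ (A v)) v := by
    refine ((hasFDerivAt_id v).inner ℝ A.hasFDerivAt).congr_fderiv ?_
    ext w
    have hsymm : inner ℝ (A v) w = inner ℝ v (A w) := hA v w
    simp [← hsymm, real_inner_comm w (A v), two_mul]
  have hfun : gaussianKernel c A = fun w => c * exp (-1 / 2 * inner ℝ w (A w)) := by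
    funext w
    simp only [gaussianKernel]
    ring_nf
  rw [hasGradientAt_iff_hasFDerivAt, hfun]
  refine (((hq.const_mul (-1 / 2)).exp).const_mul c).congr_fderiv ?_
  ext w
  simp
  ring_nf

theorem gaussianKernel_nonneg (hc : 0 ≤ c) (v : E) : 0 ≤ gaussianKernel c A v := by
  unfold gaussianKernel; positivity

theorem abs_gaussianKernel_le (hc : 0 ≤ c) (hA : ∀ v, 0 ≤ inner ℝ v (A v)) (v : E) :
    |gaussianKernel c A v| ≤ c := by
  rw [abs_of_nonneg (gaussianKernel_nonneg hc v)]
  exact mul_le_of_le_one_right hc (exp_le_one_iff.2 (by linarith [hA v]))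

theorem norm_mul_gaussianKernel_le (hc : 0 ≤ c) {ε : ℝ} (hε : 0 < ε)
    (hA : ∀ v, ε * ‖v‖ * ‖v‖ ≤ inner ℝ v (A v)) (v : E) :
    ‖v‖ * gaussianKernel c A v ≤ c * (1 + 2 / ε) := by
  have hexp : 1 + ε * ‖v‖ ^ 2 / 2 ≤ exp (inner ℝ v (A v) / 2) := by
    nlinarith [add_one_le_exp (inner ℝ v (A v) / 2), hA v]
  have hnorm : ‖v‖ ≤ (1 + 2 / ε) * (1 + ε * ‖v‖ ^ 2 / 2) := by
    have hexpand : (1 + 2 / ε) * (1 + ε * ‖v‖ ^ 2 / 2)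
        = 1 + ‖v‖ ^ 2 + 2 / ε + ε * ‖v‖ ^ 2 / 2 := by
      field_simp; ring
    rw [hexpand]
    nlinarith [sq_nonneg (‖v‖ - 1), div_pos two_pos hε, norm_nonneg v]
  have : ‖v‖ * exp (-inner ℝ v (A v) / 2) ≤ 1 + 2 / ε := by
    rw [neg_div, exp_neg, ← div_eq_mul_inv, div_le_iff₀ (exp_pos _)]
    exact hnorm.trans (by gcongr)
  unfold gaussianKernel
  nlinarith

theorem norm_gaussianKernel_smul_le (hc : 0 ≤ c) {ε : ℝ} (hε : 0 < ε)
    (hA : ∀ v, ε * ‖v‖ * ‖v‖ ≤ inner ℝ v (A v)) (v : E) :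
    ‖gaussianKernel c A v • A v‖ ≤ c * (1 + 2 / ε) * ‖A‖ :=
  calc ‖gaussianKernel c A v • A v‖ = gaussianKernel c A v * ‖A v‖ := by
        rw [norm_smul, norm_of_nonneg (gaussianKernel_nonneg hc v)]
    _ ≤ gaussianKernel c A v * (‖A‖ * ‖v‖) := by
        gcongr
        · exact gaussianKernel_nonneg hc v
        · exact A.le_opNorm v
    _ = ‖v‖ * gaussianKernel c A v * ‖A‖ := by ring
    _ ≤ c * (1 + 2 / ε) * ‖A‖ :=
        mul_le_mul_of_nonneg_right (norm_mul_gaussianKernel_le hc hε hA v) (norm_nonneg A)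

end GaussianKernel

section Convolution

variable {E : Type*} [NormedAddCommGroup E] [InnerProductSpace ℝ E] [CompleteSpace E]
  [MeasurableSpace E] [OpensMeasurableSpace E] [SecondCountableTopology E] {μ : Measure E}

theorem hasGradientAt_integral_sub_mul {K : E → ℝ} {K' : E → E} {f : E → ℝ} {B C : ℝ}
    (hK : ∀ v, HasGradientAt K (K' v) v) (hK' : Continuous K')
    (hKB : ∀ v, |K v| ≤ B) (hK'C : ∀ v, ‖K' v‖ ≤ C) (hf : Integrable f μ) (y : E) :
    HasGradientAt (fun z => ∫ x, K (z - x) * f x ∂μ) (∫ x, f x • K' (y - x) ∂μ) y := by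
  have hKc : Continuous K := continuous_iff_continuousAt.2 fun v => (hK v).continuousAt
  have hderiv : ∀ x z, HasFDerivAt (fun z => K (z - x) * f x)
      (f x • InnerProductSpace.toDual ℝ E (K' (z - x))) z := fun x z => by
    simpa using ((hK (z - x)).hasFDerivAt.comp z ((hasFDerivAt_id z).sub_const x)).mul_const (f x)
  have hdual := (InnerProductSpace.toDual ℝ E).toLinearIsometry.integral_comp_comm (μ := μ)
    (fun x => f x • K' (y - x))
  simp only [LinearIsometryEquiv.coe_toLinearIsometry, map_smul] at hdual
  rw [hasGradientAt_iff_hasFDerivAt, ← hdual]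
  refine hasFDerivAt_integral_of_dominated_of_fderiv_le
    (F' := fun z x => f x • InnerProductSpace.toDual ℝ E (K' (z - x)))
    (bound := fun x => ‖f x‖ * C) (s := Set.univ) Filter.univ_mem ?_ ?_ ?_ ?_
    (hf.norm.mul_const C) ?_
  · exact .of_forall fun z =>
      (hKc.comp (continuous_const.sub continuous_id)).aestronglyMeasurable.mul hf.1
  · exact hf.bdd_mul (hKc.comp (continuous_const.sub continuous_id)).aestronglyMeasurable
      (.of_forall fun x => hKB (y - x))
  · exact hf.1.smul ((InnerProductSpace.toDual ℝ E).continuous.comp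
      (hK'.comp (continuous_const.sub continuous_id))).aestronglyMeasurable
  · refine .of_forall fun x z _ => ?_
    rw [norm_smul, LinearIsometryEquiv.norm_map]
    exact mul_le_mul_of_nonneg_left (hK'C _) (norm_nonneg _)
  · exact .of_forall fun x z _ => hderiv x z

theorem tweedie_gaussianKernel {A S : E →L[ℝ] E} (hA : (A : E →ₗ[ℝ] E).IsSymmetric)
    (hAcoer : IsCoercive (innerSL ℝ ∘L A)) (hSA : ∀ v, S (A v) = v) {c : ℝ} (hc : 0 ≤ c)
    {f : E → ℝ} (hf : Integrable f μ) (y : E)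
    (hpos : ∫ x, gaussianKernel c A (y - x) * f x ∂μ ≠ 0) :
    (∫ x, gaussianKernel c A (y - x) * f x ∂μ)⁻¹ •
        ∫ x, (gaussianKernel c A (y - x) * f x) • x ∂μ
      = y + S (gradient (fun z => log (∫ x, gaussianKernel c A (z - x) * f x ∂μ)) y) := by
  set g := gaussianKernel c A
  set p := fun z => ∫ x, g (z - x) * f x ∂μ
  obtain ⟨ε, hε, hAε⟩ := hAcoer
  replace hAε : ∀ v, ε * ‖v‖ * ‖v‖ ≤ inner ℝ v (A v) := fun v =>
    (hAε v).trans_eq (real_inner_comm v (A v))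
  have hAnonneg : ∀ v, 0 ≤ inner ℝ v (A v) := fun v =>
    (by positivity : 0 ≤ ε * ‖v‖ * ‖v‖).trans (hAε v)
  set g' := fun v => -g v • A v
  have hg'cont : Continuous g' := continuous_gaussianKernel.neg.smul A.continuous
  have hg'bound : ∀ v, ‖g' v‖ ≤ c * (1 + 2 / ε) * ‖A‖ := fun v => by
    simpa only [g', neg_smul, norm_neg] using norm_gaussianKernel_smul_le hc hε hAε v
  have hint : Integrable (fun x => f x • g' (y - x)) μ :=
    hf.smul_bdd _ (hg'cont.comp (continuous_const.sub continuous_id)).aestronglyMeasurable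
      (.of_forall fun x => hg'bound (y - x))
  have hgf : Integrable (fun x => g (y - x) * f x) μ :=
    hf.bdd_mul
      (continuous_gaussianKernel.comp (continuous_const.sub continuous_id)).aestronglyMeasurable
      (.of_forall fun x => abs_gaussianKernel_le hc hAnonneg _)
  have hgrad : HasGradientAt p (∫ x, f x • g' (y - x) ∂μ) y :=
    hasGradientAt_integral_sub_mul (hasGradientAt_gaussianKernel hA) hg'cont
      (abs_gaussianKernel_le hc hAnonneg) hg'bound hf y
  have hlog :
      HasGradientAt (fun z => log (p z)) ((p y)⁻¹ • ∫ x, f x • g' (y - x) ∂μ) y := by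
    rw [hasGradientAt_iff_hasFDerivAt, map_smul]
    exact (hasGradientAt_iff_hasFDerivAt.1 hgrad).log hpos
  have hintegrand : ∀ x, (g (y - x) * f x) • x = (g (y - x) * f x) • y + S (f x • g' (y - x)) :=
    fun x => by
      simp only [g', map_smul, hSA]
      module
  rw [hlog.gradient, map_smul, integral_congr_ae (.of_forall hintegrand),
    integral_add (hgf.smul_const y) (S.integrable_comp hint), integral_smul_const,
    S.integral_comp_comm hint, smul_add, smul_smul, inv_mul_cancel₀ hpos, one_smul]

end Convolution

theorem tweedie_miyasawa_general (k : ℕ)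
    (Sn : Matrix (Fin k) (Fin k) ℝ) (hS : Sn.PosDef)
    (px : EuclideanSpace ℝ (Fin k) → ℝ)
    (hpx_prob : ∫ x, px x = 1)
    (φ : EuclideanSpace ℝ (Fin k) → ℝ)
    (hφ : ∀ v, φ v = (Real.sqrt ((2 * π) ^ k * Sn.det))⁻¹ *
      Real.exp (-(inner ℝ v (Matrix.toEuclideanLin Sn⁻¹ v) : ℝ) / 2))
    (pt : EuclideanSpace ℝ (Fin k) → ℝ)
    (hpt : ∀ y, pt y = ∫ x, φ (y - x) * px x)
    (y : EuclideanSpace ℝ (Fin k))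
    (hpos : 0 < pt y) :
    (pt y)⁻¹ • (∫ x, (φ (y - x) * px x) • x)
      = y + Matrix.toEuclideanLin Sn (gradient (fun z => Real.log (pt z)) y) := by
  set A := (Matrix.toEuclideanLin Sn⁻¹).toContinuousLinearMap
  obtain rfl : φ = gaussianKernel (Real.sqrt ((2 * π) ^ k * Sn.det))⁻¹ A := funext hφ
  obtain rfl : pt = _ := funext hpt
  have hA : (A : EuclideanSpace ℝ (Fin k) →ₗ[ℝ] _).IsSymmetric :=
    Matrix.isSymmetric_toEuclideanLin_iff.2 hS.inv.isHermitian
  have hAcoer : IsCoercive (innerSL ℝ ∘L A) := isCoercive_of_pos _ fun u hu => by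
    have := hS.inv.dotProduct_mulVec_pos (x := u.ofLp) (by simpa using hu)
    change 0 < inner ℝ (A u) u
    simpa [A, EuclideanSpace.inner_eq_star_dotProduct] using this
  have hSA : ∀ v, Matrix.toEuclideanLin Sn (A v) = v := fun v => by
    change Matrix.toEuclideanLin Sn (Matrix.toEuclideanLin Sn⁻¹ v) = v
    rw [← LinearMap.comp_apply, ← Matrix.toLpLin_mul_same,
      Matrix.mul_nonsing_inv _ ((Matrix.isUnit_iff_isUnit_det _).1 hS.isUnit),
      Matrix.toLpLin_one, LinearMap.id_apply]
  exact tweedie_gaussianKernel (S := (Matrix.toEuclideanLin Sn).toContinuousLinearMap) hA hAcoer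
    hSA (by positivity) (.of_integral_ne_zero (by simp [hpx_prob])) y hpos.ne'

/-- Tweedie-Miyasawa formula: E[x | x̃] = x̃ + Σ_n ∇ log p_x̃(x̃). -/
theorem tweedie_miyasawa (k : ℕ)
    (Sn : Matrix (Fin k) (Fin k) ℝ) (hS : Sn.PosDef)
    (px : EuclideanSpace ℝ (Fin k) → ℝ)
    (hpx_nonneg : ∀ x, 0 ≤ px x)
    (hpx_cont : Continuous px)
    (hpx_prob : ∫ x, px x = 1)
    (φ : EuclideanSpace ℝ (Fin k) → ℝ)
    (hφ : ∀ v, φ v = (Real.sqrt ((2 * π) ^ k * Sn.det))⁻¹ *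
      Real.exp (-(inner ℝ v (Matrix.toEuclideanLin Sn⁻¹ v) : ℝ) / 2))
    (pt : EuclideanSpace ℝ (Fin k) → ℝ)
    (hpt : ∀ y, pt y = ∫ x, φ (y - x) * px x)
    (y : EuclideanSpace ℝ (Fin k))
    (hpos : 0 < pt y)
    (hint : Integrable (fun x => (φ (y - x) * px x) • x)) :
    (pt y)⁻¹ • (∫ x, (φ (y - x) * px x) • x)
      = y + Matrix.toEuclideanLin Sn (gradient (fun z => Real.log (pt z)) y) :=
  tweedie_miyasawa_general k Sn hS px hpx_prob φ hφ pt hpt y hpos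
end

section
/- Let x̃ = x + n where n ~ N(0, Σ_n) is independent of x, and both x and x̃ have smooth positive densities. Then the score of the noisy data equals the conditional expectation of the score of the clean data: Ψ_x̃(y) = E[Ψ_x(x) | x̃ = y], where Ψ_x = ∇ log p_x and Ψ_x̃ = ∇ log p_x̃. -/
open MeasureTheory Real

section AuxLemmas

variable {E : Type*} [NormedAddCommGroup E] [InnerProductSpace ℝ E] [FiniteDimensional ℝ E]

theorem aux_quad_lower_bound (T : E →L[ℝ] E)
    (h : ∀ v : E, v ≠ 0 → 0 < (inner ℝ v (T v) : ℝ)) :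
    ∃ ε > 0, ∀ v : E, ε * ‖v‖ ^ 2 ≤ (inner ℝ v (T v) : ℝ) := by
  by_cases hne : (Metric.sphere (0 : E) 1).Nonempty
  · have hcont : ContinuousOn (fun v : E => (inner ℝ v (T v) : ℝ)) (Metric.sphere 0 1) :=
      (continuous_id.inner T.continuous).continuousOn
    obtain ⟨v₀, hv₀, hmin⟩ := (isCompact_sphere (0 : E) 1).exists_isMinOn hne hcont
    have hv₀ne : v₀ ≠ 0 := by
      intro h0
      simp [h0] at hv₀
    refine ⟨inner ℝ v₀ (T v₀), h v₀ hv₀ne, fun v => ?_⟩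
    rcases eq_or_ne v 0 with rfl | hv
    · simp
    · have hnv : ‖v‖ ≠ 0 := norm_ne_zero_iff.2 hv
      have hu : ‖v‖⁻¹ • v ∈ Metric.sphere (0 : E) 1 := by
        simp [norm_smul, abs_of_nonneg (inv_nonneg.2 (norm_nonneg v)), inv_mul_cancel₀ hnv]
      have h2 : (inner ℝ (‖v‖⁻¹ • v) (T (‖v‖⁻¹ • v)) : ℝ)
          = ‖v‖⁻¹ * ‖v‖⁻¹ * inner ℝ v (T v) := by
        rw [T.map_smul, real_inner_smul_left, real_inner_smul_right]
        ring
      have key : (inner ℝ v₀ (T v₀) : ℝ) ≤ ‖v‖⁻¹ * ‖v‖⁻¹ * inner ℝ v (T v) := by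
        have h5 := hmin hu
        simp only [Set.mem_setOf_eq] at h5
        rwa [h2] at h5
      have h3 : (inner ℝ v₀ (T v₀) : ℝ) * ‖v‖ ^ 2 ≤ ‖v‖⁻¹ * ‖v‖⁻¹ * inner ℝ v (T v) * ‖v‖ ^ 2 := by
        nlinarith [sq_nonneg ‖v‖]
      calc (inner ℝ v₀ (T v₀) : ℝ) * ‖v‖ ^ 2 ≤ ‖v‖⁻¹ * ‖v‖⁻¹ * inner ℝ v (T v) * ‖v‖ ^ 2 := h3
        _ = inner ℝ v (T v) := by
            rw [pow_two]
            field_simp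
  · refine ⟨1, one_pos, fun v => ?_⟩
    rcases eq_or_ne v 0 with rfl | hv
    · simp
    · exact absurd ⟨‖v‖⁻¹ • v, by simp [norm_smul, abs_of_nonneg (inv_nonneg.2 (norm_nonneg v)),
        inv_mul_cancel₀ (norm_ne_zero_iff.2 hv)]⟩ hne

theorem aux_t_exp_bound (ε : ℝ) (hε : 0 < ε) (t : ℝ) (ht : 0 ≤ t) :
    t * Real.exp (-(ε * t ^ 2) / 2) ≤ max 1 (2 / ε) := by
  rcases le_or_gt t 1 with h1 | h1
  · have : Real.exp (-(ε * t ^ 2) / 2) ≤ 1 := by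
      apply Real.exp_le_one_iff.2
      nlinarith
    calc t * Real.exp (-(ε * t ^ 2) / 2) ≤ 1 * 1 := by
          apply mul_le_mul h1 this (Real.exp_nonneg _) zero_le_one
      _ ≤ max 1 (2 / ε) := by simp
  · have hexp : ε * t ^ 2 / 2 ≤ Real.exp (ε * t ^ 2 / 2) :=
      (Real.add_one_le_exp _).trans' (by linarith)
    have hpos : 0 < ε * t ^ 2 / 2 := by positivity
    have : Real.exp (-(ε * t ^ 2) / 2) ≤ (ε * t ^ 2 / 2)⁻¹ := by
      rw [neg_div, Real.exp_neg]
      exact inv_anti₀ hpos hexp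
    calc t * Real.exp (-(ε * t ^ 2) / 2) ≤ t * (ε * t ^ 2 / 2)⁻¹ := by
          apply mul_le_mul_of_nonneg_left this ht
      _ = 2 / (ε * t) := by field_simp
      _ ≤ 2 / ε := by
          apply div_le_div_of_nonneg_left (by norm_num) hε
          nlinarith
      _ ≤ max 1 (2 / ε) := le_max_right _ _

theorem aux_phi_hasFDerivAt (T : E →L[ℝ] E) (c : ℝ) (φ : E → ℝ)
    (hφ : ∀ v, φ v = c * Real.exp (-(inner ℝ v (T v) : ℝ) / 2)) (v : E) :
    HasFDerivAt φ
      ((c * Real.exp (-(inner ℝ v (T v) : ℝ) / 2) * -(2:ℝ)⁻¹) •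
        ((fderivInnerCLM ℝ (v, T v)).comp
          ((ContinuousLinearMap.id ℝ E).prod T))) v := by
  have hQ : HasFDerivAt (fun w : E => (inner ℝ w (T w) : ℝ))
      ((fderivInnerCLM ℝ (v, T v)).comp ((ContinuousLinearMap.id ℝ E).prod T)) v :=
    (hasFDerivAt_id v).inner ℝ (T.hasFDerivAt)
  have h2 : HasFDerivAt (fun w : E => -(inner ℝ w (T w) : ℝ) / 2)
      ((-(2:ℝ)⁻¹) • ((fderivInnerCLM ℝ (v, T v)).comp
        ((ContinuousLinearMap.id ℝ E).prod T))) v := by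
    have h2' := hQ.const_smul (-(2:ℝ)⁻¹)
    have heq : (fun w : E => -(2:ℝ)⁻¹ • (inner ℝ w (T w) : ℝ))
        = fun w : E => -(inner ℝ w (T w) : ℝ) / 2 := by
      funext w
      simp [smul_eq_mul]
      ring
    rw [← heq]; exact h2'
  have h3 := (h2.exp).const_mul c
  have hfun : φ = fun w => c * Real.exp (-(inner ℝ w (T w) : ℝ) / 2) := funext hφ
  rw [hfun, mul_assoc, ← smul_smul, ← smul_smul]
  exact h3

end AuxLemmas

set_option maxHeartbeats 2000000 in
set_option synthInstance.maxHeartbeats 400000 in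
/-- The noisy-data score is the conditional expectation of the clean-data score:
Ψ_x̃(y) = E[Ψ_x(x) | x̃ = y]. -/
theorem noisy_score_is_cond_exp_of_clean_score (k : ℕ)
    (Sn : Matrix (Fin k) (Fin k) ℝ) (hS : Sn.PosDef)
    (px : EuclideanSpace ℝ (Fin k) → ℝ)
    (hpx_smooth : ContDiff ℝ (⊤ : ℕ∞) px)
    (hpx_pos : ∀ x, 0 < px x)
    (hpx_prob : ∫ x, px x = 1)
    (φ : EuclideanSpace ℝ (Fin k) → ℝ)
    (hφ : ∀ v, φ v = (Real.sqrt ((2 * π) ^ k * Sn.det))⁻¹ *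
      Real.exp (-(inner ℝ v (Matrix.toEuclideanLin Sn⁻¹ v) : ℝ) / 2))
    (pt : EuclideanSpace ℝ (Fin k) → ℝ)
    (hpt : ∀ y, pt y = ∫ x, φ (y - x) * px x)
    (hpt_smooth : ContDiff ℝ (⊤ : ℕ∞) pt)
    (hpt_pos : ∀ y, 0 < pt y)
    (y : EuclideanSpace ℝ (Fin k))
    (hint : Integrable (fun x =>
      (φ (y - x) * px x) • gradient (fun z => Real.log (px z)) x)) :
    gradient (fun z => Real.log (pt z)) y
      = (pt y)⁻¹ • ∫ x, (φ (y - x) * px x) • gradient (fun z => Real.log (px z)) x := by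
  classical
  set c : ℝ := (Real.sqrt ((2 * π) ^ k * Sn.det))⁻¹ with hc_def
  set T : EuclideanSpace ℝ (Fin k) →L[ℝ] EuclideanSpace ℝ (Fin k) :=
    LinearMap.toContinuousLinearMap
      (Matrix.toEuclideanLin Sn⁻¹ : EuclideanSpace ℝ (Fin k) →ₗ[ℝ] EuclideanSpace ℝ (Fin k)) with hT_def
  have hφT : ∀ v, φ v = c * Real.exp (-(inner ℝ v (T v) : ℝ) / 2) := fun v => hφ v
  -- positivity of the normalizing constant
  have hc_pos : 0 < c := by
    have : 0 < (2 * π) ^ k * Sn.det :=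
      mul_pos (pow_pos (by positivity) k) hS.det_pos
    exact inv_pos.2 (Real.sqrt_pos.2 this)
  -- positivity of the quadratic form
  have hSinv : (Sn⁻¹).PosDef := hS.inv
  have hQpos : ∀ v : EuclideanSpace ℝ (Fin k), v ≠ 0 → 0 < (inner ℝ v (T v) : ℝ) := by
    intro v hv
    have h := hSinv.re_dotProduct_pos (x := (WithLp.equiv 2 _ v)) (by simpa using hv)
    simpa [hT_def, PiLp.inner_apply, Matrix.toEuclideanLin_apply, dotProduct,
      mul_comm] using h
  have hQnonneg : ∀ v : EuclideanSpace ℝ (Fin k), 0 ≤ (inner ℝ v (T v) : ℝ) := by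
    intro v
    have h := hSinv.posSemidef.re_dotProduct_nonneg (WithLp.equiv 2 _ v)
    simpa [hT_def, PiLp.inner_apply, Matrix.toEuclideanLin_apply, dotProduct,
      mul_comm] using h
  obtain ⟨ε, hε, hQlow⟩ := aux_quad_lower_bound T hQpos
  -- basic facts about φ
  have hφ_smooth : ContDiff ℝ (⊤ : ℕ∞) φ := by
    have : φ = fun v => c * Real.exp (-(inner ℝ v (T v) : ℝ) / 2) := funext hφT
    rw [this]
    exact contDiff_const.mul ((((contDiff_id.inner ℝ T.contDiff)).neg.div_const 2).exp)
  have hφ_cont : Continuous φ := hφ_smooth.continuous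
  have hφ_nonneg : ∀ v, 0 ≤ φ v := by
    intro v
    rw [hφT v]
    positivity
  have hφ_le : ∀ v, φ v ≤ c := by
    intro v
    rw [hφT v]
    calc c * Real.exp (-(inner ℝ v (T v) : ℝ) / 2) ≤ c * 1 := by
          apply mul_le_mul_of_nonneg_left _ hc_pos.le
          apply Real.exp_le_one_iff.2
          have := hQnonneg v
          linarith
      _ = c := mul_one c
  -- bound on the derivative of φ
  set M : ℝ := c * ‖T‖ * max 1 (2 / ε) with hM_def
  have hM_nonneg : 0 ≤ M := by positivity
  have hφ'_bound : ∀ v : EuclideanSpace ℝ (Fin k), ‖fderiv ℝ φ v‖ ≤ M := by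
    intro v
    rw [(aux_phi_hasFDerivAt T c φ hφT v).fderiv, norm_smul]
    have hD : ‖(fderivInnerCLM ℝ (v, T v)).comp
        ((ContinuousLinearMap.id ℝ (EuclideanSpace ℝ (Fin k))).prod T)‖ ≤ 2 * ‖T‖ * ‖v‖ := by
      apply ContinuousLinearMap.opNorm_le_bound _ (by positivity)
      intro w
      rw [ContinuousLinearMap.comp_apply]
      simp only [ContinuousLinearMap.prod_apply, ContinuousLinearMap.coe_id', id_eq,
        fderivInnerCLM_apply]
      rw [Real.norm_eq_abs]
      calc |(inner ℝ v (T w) : ℝ) + inner ℝ w (T v)|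
          ≤ |(inner ℝ v (T w) : ℝ)| + |(inner ℝ w (T v) : ℝ)| := abs_add_le _ _
        _ ≤ ‖v‖ * ‖T w‖ + ‖w‖ * ‖T v‖ :=
            add_le_add (abs_real_inner_le_norm _ _) (abs_real_inner_le_norm _ _)
        _ ≤ ‖v‖ * (‖T‖ * ‖w‖) + ‖w‖ * (‖T‖ * ‖v‖) := by
            gcongr
            exacts [T.le_opNorm w, T.le_opNorm v]
        _ = 2 * ‖T‖ * ‖v‖ * ‖w‖ := by ring
    have he : Real.exp (-(inner ℝ v (T v) : ℝ) / 2) ≤ Real.exp (-(ε * ‖v‖ ^ 2) / 2) := by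
      apply Real.exp_le_exp.2
      have := hQlow v
      linarith
    have hcoef : ‖c * Real.exp (-(inner ℝ v (T v) : ℝ) / 2) * -(2:ℝ)⁻¹‖
        = c * Real.exp (-(inner ℝ v (T v) : ℝ) / 2) * 2⁻¹ := by
      rw [norm_mul, norm_mul, Real.norm_eq_abs, Real.norm_eq_abs, Real.norm_eq_abs,
        abs_of_pos hc_pos, abs_of_pos (Real.exp_pos _)]
      norm_num
    rw [hcoef]
    have h3 : ‖v‖ * Real.exp (-(inner ℝ v (T v) : ℝ) / 2) ≤ max 1 (2 / ε) := by
      calc ‖v‖ * Real.exp (-(inner ℝ v (T v) : ℝ) / 2)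
          ≤ ‖v‖ * Real.exp (-(ε * ‖v‖ ^ 2) / 2) :=
            mul_le_mul_of_nonneg_left he (norm_nonneg v)
        _ ≤ max 1 (2 / ε) := aux_t_exp_bound ε hε ‖v‖ (norm_nonneg v)
    calc c * Real.exp (-(inner ℝ v (T v) : ℝ) / 2) * 2⁻¹ * ‖(fderivInnerCLM ℝ (v, T v)).comp
          ((ContinuousLinearMap.id ℝ (EuclideanSpace ℝ (Fin k))).prod T)‖
        ≤ c * Real.exp (-(inner ℝ v (T v) : ℝ) / 2) * 2⁻¹ * (2 * ‖T‖ * ‖v‖) := by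
          apply mul_le_mul_of_nonneg_left hD (by positivity)
      _ = c * ‖T‖ * (‖v‖ * Real.exp (-(inner ℝ v (T v) : ℝ) / 2)) := by ring
      _ ≤ c * ‖T‖ * max 1 (2 / ε) := by
          apply mul_le_mul_of_nonneg_left h3 (by positivity)
      _ = M := hM_def.symm
  have hφ'_cont : Continuous (fderiv ℝ φ) := (hφ_smooth.continuous_fderiv (by simp))
  -- facts about px
  have hpx_int : Integrable px := integrable_of_integral_eq_one hpx_prob
  have hpx_cont : Continuous px := hpx_smooth.continuous
  have hpx_diff : Differentiable ℝ px := hpx_smooth.differentiable (by simp)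
  have hpx'_cont : Continuous (fderiv ℝ px) := hpx_smooth.continuous_fderiv (by simp)
  -- the integrand rewrite
  have hgrad_log_px : ∀ x, fderiv ℝ (fun z => Real.log (px z)) x
      = (px x)⁻¹ • fderiv ℝ px x := by
    intro x
    have hl : HasDerivAt Real.log (px x)⁻¹ (px x) := Real.hasDerivAt_log (hpx_pos x).ne'
    exact (hl.comp_hasFDerivAt x (hpx_diff x).hasFDerivAt).fderiv
  have hintegrand : ∀ x, (φ (y - x) * px x) • gradient (fun z => Real.log (px z)) x
      = φ (y - x) • gradient px x := by
    intro x
    rw [gradient, gradient, hgrad_log_px x, map_smulₛₗ]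
    rw [smul_smul]
    congr 1
    simp only [starRingEnd_apply, star_trivial]
    rw [mul_assoc, mul_inv_cancel₀ (hpx_pos x).ne', mul_one]
  have hint' : Integrable (fun x => φ (y - x) • gradient px x) := by
    have : (fun x => (φ (y - x) * px x) • gradient (fun z => Real.log (px z)) x)
        = fun x => φ (y - x) • gradient px x := funext hintegrand
    rwa [this] at hint
  -- integrability of φ(y-·) • fderiv px (CLM-valued)
  have hnorm_grad : ∀ x, ‖gradient px x‖ = ‖fderiv ℝ px x‖ := by
    intro x
    rw [gradient]
    exact LinearIsometryEquiv.norm_map _ _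
  have hintCLM : Integrable (fun x => φ (y - x) • fderiv ℝ px x) := by
    apply Integrable.mono' hint'.norm
    · exact ((hφ_cont.comp (continuous_const.sub continuous_id)).smul hpx'_cont).aestronglyMeasurable
    · filter_upwards with x
      apply le_of_eq
      rw [norm_smul, norm_smul, hnorm_grad x]
  -- differentiation under the integral sign
  have hintφ' : Integrable (fun a => px a • fderiv ℝ φ (y - a)) := by
    apply Integrable.mono' (hpx_int.const_mul M)
    · exact (hpx_cont.smul
        (hφ'_cont.comp (continuous_const.sub continuous_id))).aestronglyMeasurable
    · filter_upwards with a
      rw [norm_smul, Real.norm_eq_abs, abs_of_pos (hpx_pos a)]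
      calc px a * ‖fderiv ℝ φ (y - a)‖ ≤ px a * M :=
            mul_le_mul_of_nonneg_left (hφ'_bound _) (hpx_pos a).le
        _ = M * px a := mul_comm _ _
  have hpt_fderiv : HasFDerivAt pt (∫ a, px a • fderiv ℝ φ (y - a)) y := by
    have key : HasFDerivAt (fun z => ∫ a, φ (z - a) * px a)
        (∫ a, px a • fderiv ℝ φ (y - a)) y := by
      apply hasFDerivAt_integral_of_dominated_of_fderiv_le (s := Metric.ball y 1)
        (bound := fun a => M * px a)
        (F' := fun z a => px a • fderiv ℝ φ (z - a)) (Metric.ball_mem_nhds y one_pos)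
      · filter_upwards with z
        exact ((hφ_cont.comp (continuous_const.sub continuous_id)).mul
          hpx_cont).aestronglyMeasurable
      · apply Integrable.mono' (hpx_int.const_mul c)
        · exact ((hφ_cont.comp (continuous_const.sub continuous_id)).mul
            hpx_cont).aestronglyMeasurable
        · filter_upwards with a
          rw [Real.norm_eq_abs, abs_mul, abs_of_nonneg (hφ_nonneg _), abs_of_pos (hpx_pos a)]
          exact mul_le_mul_of_nonneg_right (hφ_le _) (hpx_pos a).le
      · exact (hpx_cont.smul
          (hφ'_cont.comp (continuous_const.sub continuous_id))).aestronglyMeasurable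
      · filter_upwards with a
        intro z hz
        calc ‖px a • fderiv ℝ φ (z - a)‖ = ‖px a‖ * ‖fderiv ℝ φ (z - a)‖ := norm_smul _ _
          _ = px a * ‖fderiv ℝ φ (z - a)‖ := by
              rw [Real.norm_eq_abs, abs_of_pos (hpx_pos a)]
          _ ≤ px a * M := mul_le_mul_of_nonneg_left (hφ'_bound _) (hpx_pos a).le
          _ = M * px a := mul_comm _ _
      · exact hpx_int.const_mul M
      · filter_upwards with a
        intro z hz
        have h1 : HasFDerivAt (fun w : EuclideanSpace ℝ (Fin k) => w - a)
            (ContinuousLinearMap.id ℝ (EuclideanSpace ℝ (Fin k))) z :=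
          (hasFDerivAt_id z).sub_const a
        have h2 := ((hφ_smooth.differentiable (by simp) (z - a)).hasFDerivAt).comp z h1
        have h3 := h2.mul_const (px a)
        rw [ContinuousLinearMap.comp_id] at h3
        exact h3
    have hpt_eq : pt = fun z => ∫ a, φ (z - a) * px a := funext hpt
    rw [hpt_eq]
    exact key
  -- integration by parts
  have hg_diff : Differentiable ℝ (fun z : EuclideanSpace ℝ (Fin k) => φ (y - z)) :=
    (hφ_smooth.differentiable (by simp)).comp ((differentiable_const y).sub differentiable_id)
  have hg'_eq : ∀ z, fderiv ℝ (fun z : EuclideanSpace ℝ (Fin k) => φ (y - z)) z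
      = -(fderiv ℝ φ (y - z)) := by
    intro z
    have h1 : HasFDerivAt (fun w : EuclideanSpace ℝ (Fin k) => y - w)
        (-(ContinuousLinearMap.id ℝ (EuclideanSpace ℝ (Fin k)))) z :=
      (hasFDerivAt_id z).const_sub y
    have h2 := ((hφ_smooth.differentiable (by simp) (y - z)).hasFDerivAt).comp z h1
    have h3 : (fderiv ℝ φ (y - z)).comp (-(ContinuousLinearMap.id ℝ (EuclideanSpace ℝ (Fin k))))
        = -(fderiv ℝ φ (y - z)) := by
      ext u
      simp
    rw [h3] at h2
    exact h2.fderiv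
  have hIBP : ∀ w : EuclideanSpace ℝ (Fin k), (∫ a, px a • fderiv ℝ φ (y - a)) w
      = ∫ a, φ (y - a) * (fderiv ℝ px a w) := by
    intro w
    have happly_cont : Continuous (fun x => fderiv ℝ px x w) :=
      (ContinuousLinearMap.apply ℝ ℝ w).continuous.comp hpx'_cont
    have hgapply_cont : Continuous
        (fun x : EuclideanSpace ℝ (Fin k) => fderiv ℝ φ (y - x) w) :=
      (ContinuousLinearMap.apply ℝ ℝ w).continuous.comp
        (hφ'_cont.comp (continuous_const.sub continuous_id))
    have hf'g : Integrable (fun x => fderiv ℝ px x w * φ (y - x)) := by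
      apply Integrable.mono' (hintCLM.norm.mul_const ‖w‖)
      · exact (happly_cont.mul
          (hφ_cont.comp (continuous_const.sub continuous_id))).aestronglyMeasurable
      · filter_upwards with x
        rw [Real.norm_eq_abs, abs_mul, abs_of_nonneg (hφ_nonneg _)]
        calc |fderiv ℝ px x w| * φ (y - x) ≤ ‖fderiv ℝ px x‖ * ‖w‖ * φ (y - x) := by
              apply mul_le_mul_of_nonneg_right ((fderiv ℝ px x).le_opNorm w) (hφ_nonneg _)
          _ = ‖φ (y - x) • fderiv ℝ px x‖ * ‖w‖ := by
              rw [norm_smul, Real.norm_eq_abs, abs_of_nonneg (hφ_nonneg _)]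
              ring
    have hfg' : Integrable
        (fun x => px x * fderiv ℝ (fun z : EuclideanSpace ℝ (Fin k) => φ (y - z)) x w) := by
      apply Integrable.mono' (hpx_int.const_mul (M * ‖w‖))
      · apply Continuous.aestronglyMeasurable
        apply hpx_cont.mul
        have : (fun x => fderiv ℝ (fun z : EuclideanSpace ℝ (Fin k) => φ (y - z)) x w)
            = fun x => -(fderiv ℝ φ (y - x) w) := by
          funext x
          rw [hg'_eq x]
          simp
        rw [this]
        exact hgapply_cont.neg
      · filter_upwards with x
        rw [hg'_eq x, Real.norm_eq_abs, abs_mul, abs_of_pos (hpx_pos x)]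
        simp only [ContinuousLinearMap.neg_apply, abs_neg]
        calc px x * |fderiv ℝ φ (y - x) w| ≤ px x * (M * ‖w‖) := by
              apply mul_le_mul_of_nonneg_left _ (hpx_pos x).le
              calc |fderiv ℝ φ (y - x) w| ≤ ‖fderiv ℝ φ (y - x)‖ * ‖w‖ :=
                    (fderiv ℝ φ (y - x)).le_opNorm w
                _ ≤ M * ‖w‖ := mul_le_mul_of_nonneg_right (hφ'_bound _) (norm_nonneg w)
          _ = M * ‖w‖ * px x := by ring
    have hfg : Integrable (fun x => px x * φ (y - x)) := by
      apply Integrable.mono' (hpx_int.const_mul c)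
      · exact (hpx_cont.mul
          (hφ_cont.comp (continuous_const.sub continuous_id))).aestronglyMeasurable
      · filter_upwards with x
        rw [Real.norm_eq_abs, abs_mul, abs_of_pos (hpx_pos x), abs_of_nonneg (hφ_nonneg _)]
        calc px x * φ (y - x) ≤ px x * c := mul_le_mul_of_nonneg_left (hφ_le _) (hpx_pos x).le
          _ = c * px x := mul_comm _ _
    have hparts := integral_mul_fderiv_eq_neg_fderiv_mul_of_integrable
      hf'g hfg' hfg (fun x _ => hpx_diff x) (fun x _ => hg_diff x)
    have lhs_eq : (∫ a, px a • fderiv ℝ φ (y - a)) w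
        = -∫ a, px a * fderiv ℝ (fun z : EuclideanSpace ℝ (Fin k) => φ (y - z)) a w := by
      rw [ContinuousLinearMap.integral_apply hintφ' w, ← integral_neg]
      congr 1
      funext a
      rw [hg'_eq a]
      simp only [ContinuousLinearMap.smul_apply, ContinuousLinearMap.neg_apply, smul_eq_mul]
      ring
    rw [lhs_eq, hparts, neg_neg]
    congr 1
    funext a
    rw [mul_comm]
  -- final assembly
  have hptd : HasFDerivAt (fun z => Real.log (pt z))
      ((pt y)⁻¹ • (∫ a, px a • fderiv ℝ φ (y - a))) y :=
    (Real.hasDerivAt_log (hpt_pos y).ne').comp_hasFDerivAt y hpt_fderiv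
  apply ext_inner_right ℝ
  intro w
  rw [gradient, InnerProductSpace.toDual_symm_apply, hptd.fderiv]
  rw [ContinuousLinearMap.smul_apply, hIBP w]
  have hR : (inner ℝ ((pt y)⁻¹ • ∫ x, (φ (y - x) * px x) • gradient (fun z => Real.log (px z)) x) w : ℝ)
      = (pt y)⁻¹ * ∫ x, φ (y - x) * (fderiv ℝ px x w) := by
    rw [real_inner_smul_left]
    congr 1
    have hI : (fun x => (φ (y - x) * px x) • gradient (fun z => Real.log (px z)) x)
        = fun x => φ (y - x) • gradient px x := funext hintegrand
    rw [hI, real_inner_comm, ← integral_inner hint' w]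
    congr 1
    funext x
    rw [real_inner_comm, real_inner_smul_left]
    congr 1
    rw [gradient, InnerProductSpace.toDual_symm_apply]
  rw [hR]
  simp [smul_eq_mul]
end

section
/- If the clean-data score Ψ_x satisfies ‖Ψ_x(ξ)‖ ≤ C for all ξ ∈ R^k, then the noisy-data score Ψ_x̃ obtained by adding independent Gaussian noise also satisfies ‖Ψ_x̃(y)‖ ≤ C for all y ∈ R^k. -/
open MeasureTheory Real InnerProductSpace

set_option maxHeartbeats 1000000
set_option synthInstance.maxHeartbeats 400000

/-- If the clean-data score is bounded by C, so is the noisy-data score. -/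
theorem noisy_score_bounded (k : ℕ)
    (Sn : Matrix (Fin k) (Fin k) ℝ) (hS : Sn.PosDef)
    (px : EuclideanSpace ℝ (Fin k) → ℝ)
    (hpx_smooth : ContDiff ℝ (⊤ : ℕ∞) px)
    (hpx_pos : ∀ x, 0 < px x)
    (hpx_prob : ∫ x, px x = 1)
    (φ : EuclideanSpace ℝ (Fin k) → ℝ)
    (hφ : ∀ v, φ v = (Real.sqrt ((2 * π) ^ k * Sn.det))⁻¹ *
      Real.exp (-(inner ℝ v (Matrix.toEuclideanLin Sn⁻¹ v) : ℝ) / 2))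
    (pt : EuclideanSpace ℝ (Fin k) → ℝ)
    (hpt : ∀ y, pt y = ∫ x, φ (y - x) * px x)
    (hpt_smooth : ContDiff ℝ (⊤ : ℕ∞) pt)
    (hpt_pos : ∀ y, 0 < pt y)
    (hint : ∀ y, Integrable (fun x =>
      (φ (y - x) * px x) • gradient (fun z => Real.log (px z)) x))
    (C : ℝ)
    (hC : ∀ ξ, ‖gradient (fun z => Real.log (px z)) ξ‖ ≤ C) :
    ∀ y, ‖gradient (fun z => Real.log (pt z)) y‖ ≤ C := by
  classical
  have hC0 : 0 ≤ C := le_trans (norm_nonneg _) (hC 0)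
  have hpx_diff : ∀ z, DifferentiableAt ℝ px z :=
    fun z => (hpx_smooth.differentiable (by simp)).differentiableAt
  -- derivative of log ∘ px
  have hLfd : ∀ z, HasFDerivAt (fun z => Real.log (px z))
      ((px z)⁻¹ • fderiv ℝ px z) z := fun z =>
    (Real.hasDerivAt_log (hpx_pos z).ne').comp_hasFDerivAt z (hpx_diff z).hasFDerivAt
  have hgradL : ∀ z, gradient (fun z => Real.log (px z)) z = (px z)⁻¹ • gradient px z := by
    intro z
    have h := (hLfd z).hasGradientAt.gradient
    rw [h]
    simp [gradient]
  have hgradpx : ∀ z, gradient px z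
      = px z • gradient (fun z => Real.log (px z)) z := by
    intro z
    rw [hgradL, smul_smul, mul_inv_cancel₀ (hpx_pos z).ne', one_smul]
  have hnorm_fderiv : ∀ (f : EuclideanSpace ℝ (Fin k) → ℝ) z,
      ‖fderiv ℝ f z‖ = ‖gradient f z‖ :=
    fun f z => (LinearIsometryEquiv.norm_map (toDual ℝ (EuclideanSpace ℝ (Fin k))).symm _).symm
  have hgrad_bound : ∀ z, ‖gradient px z‖ ≤ C * px z := by
    intro z
    rw [hgradpx z, norm_smul, Real.norm_of_nonneg (hpx_pos z).le, mul_comm]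
    exact mul_le_mul_of_nonneg_right (hC z) (hpx_pos z).le
  -- log-Lipschitz bound for px
  have hLip : ∀ a b : EuclideanSpace ℝ (Fin k),
      px a ≤ Real.exp (C * ‖a - b‖) * px b := by
    intro a b
    have hdiff : ∀ x ∈ (Set.univ : Set (EuclideanSpace ℝ (Fin k))),
        DifferentiableAt ℝ (fun z => Real.log (px z)) x :=
      fun x _ => (hLfd x).differentiableAt
    have hbd : ∀ x ∈ (Set.univ : Set (EuclideanSpace ℝ (Fin k))),
        ‖fderiv ℝ (fun z => Real.log (px z)) x‖ ≤ C := by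
      intro x _; rw [hnorm_fderiv]; exact hC x
    have := Convex.norm_image_sub_le_of_norm_fderiv_le hdiff hbd convex_univ
      (Set.mem_univ b) (Set.mem_univ a)
    have h2 : Real.log (px a) - Real.log (px b) ≤ C * ‖a - b‖ :=
      le_trans (le_abs_self _) this
    have h3 : px a = Real.exp (Real.log (px a)) := (Real.exp_log (hpx_pos a)).symm
    rw [h3, ← Real.exp_log (hpx_pos b), ← Real.exp_add]
    exact Real.exp_le_exp.mpr (by linarith)
  -- positivity and continuity of φ
  have hφ_pos : ∀ v, 0 < φ v := by
    intro v
    rw [hφ v]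
    have h1 : 0 < (2 * π) ^ k * Sn.det :=
      mul_pos (pow_pos (by positivity) k) hS.det_pos
    positivity
  have hφ_cont : Continuous φ := by
    have : φ = fun v => (Real.sqrt ((2 * π) ^ k * Sn.det))⁻¹ *
        Real.exp (-(inner ℝ v (Matrix.toEuclideanLin Sn⁻¹ v) : ℝ) / 2) := funext hφ
    rw [this]
    exact continuous_const.mul (Real.continuous_exp.comp
      ((continuous_id.inner ((Matrix.toEuclideanLin Sn⁻¹).continuous_of_finiteDimensional)).neg.div_const 2))
  -- integrability facts
  have hf_int : ∀ y, Integrable (fun x => φ (y - x) * px x) := by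
    intro y
    by_contra h
    exact (hpt_pos y).ne' ((hpt y).trans (integral_undef h))
  have hF_int : ∀ y, Integrable (fun u => φ u * px (y - u)) := by
    intro y
    have := (hf_int y).comp_sub_left y
    simpa [sub_sub_cancel] using this
  have hG_int' : ∀ y, Integrable (fun x => φ (y - x) • gradient px x) := by
    intro y
    have := hint y
    simp_rw [mul_smul, ← hgradpx] at this
    exact this
  have hG_int : ∀ y, Integrable (fun u => φ u • gradient px (y - u)) := by
    intro y
    have := (hG_int' y).comp_sub_left y
    simpa [sub_sub_cancel] using this
  -- rewrite pt via change of variables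
  have hpt' : ∀ y, pt y = ∫ u, φ u * px (y - u) := by
    intro y
    rw [hpt y, ← integral_sub_left_eq_self (fun t => φ t * px (y - t)) volume y]
    simp [sub_sub_cancel]
  intro y₀
  -- differentiation under the integral sign
  have key : HasFDerivAt (fun y => ∫ u, φ u * px (y - u))
      (∫ u, φ u • fderiv ℝ px (y₀ - u)) y₀ := by
    apply hasFDerivAt_integral_of_dominated_of_fderiv_le
      (F' := fun y u => φ u • fderiv ℝ px (y - u))
      (bound := fun u => (C * Real.exp C) * (φ u * px (y₀ - u)))
      (s := Metric.ball y₀ 1) (Metric.ball_mem_nhds y₀ one_pos)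
    · filter_upwards with y
      exact (hφ_cont.mul (hpx_smooth.continuous.comp
        (continuous_const.sub continuous_id))).aestronglyMeasurable
    · exact hF_int y₀
    · exact (hφ_cont.smul ((hpx_smooth.continuous_fderiv (by simp)).comp
        (continuous_const.sub continuous_id))).aestronglyMeasurable
    · filter_upwards with u
      intro y hy
      have hyd : ‖y - y₀‖ ≤ 1 := by
        rw [Metric.mem_ball, dist_eq_norm] at hy
        exact hy.le
      have h1 : ‖fderiv ℝ px (y - u)‖ ≤ C * px (y - u) := by
        rw [hnorm_fderiv]; exact hgrad_bound _
      have h2 : px (y - u) ≤ Real.exp C * px (y₀ - u) := by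
        have := hLip (y - u) (y₀ - u)
        have he : (y - u) - (y₀ - u) = y - y₀ := by abel
        rw [he] at this
        refine this.trans (mul_le_mul_of_nonneg_right ?_ (hpx_pos _).le)
        exact Real.exp_le_exp.mpr (by nlinarith [norm_nonneg (y - y₀)])
      rw [norm_smul (φ u) (fderiv ℝ px (y - u)), Real.norm_of_nonneg (hφ_pos u).le]
      calc φ u * ‖fderiv ℝ px (y - u)‖
          ≤ φ u * (C * px (y - u)) :=
            mul_le_mul_of_nonneg_left h1 (hφ_pos u).le
        _ ≤ φ u * (C * (Real.exp C * px (y₀ - u))) := by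
            refine mul_le_mul_of_nonneg_left ?_ (hφ_pos u).le
            exact mul_le_mul_of_nonneg_left h2 hC0
        _ = (C * Real.exp C) * (φ u * px (y₀ - u)) := by ring
    · exact ((hF_int y₀).const_mul _)
    · filter_upwards with u
      intro y _
      have h1 : HasFDerivAt (fun y : EuclideanSpace ℝ (Fin k) => y - u)
          (ContinuousLinearMap.id ℝ _) y := (hasFDerivAt_id y).sub_const u
      have h2 : HasFDerivAt px (fderiv ℝ px (y - u)) (y - u) :=
        (hpx_diff (y - u)).hasFDerivAt
      have h3 := h2.comp y h1
      rw [ContinuousLinearMap.comp_id] at h3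
      exact h3.const_mul (φ u)
  have hpt_eq : pt = fun y => ∫ u, φ u * px (y - u) := funext hpt'
  have key' : HasFDerivAt pt (∫ u, φ u • fderiv ℝ px (y₀ - u)) y₀ := by
    rw [hpt_eq]; exact key
  set D : EuclideanSpace ℝ (Fin k) →L[ℝ] ℝ := ∫ u, φ u • fderiv ℝ px (y₀ - u) with hD
  -- bound on ‖D‖
  have hDnorm : ‖D‖ ≤ C * pt y₀ := by
    have h1 : ‖D‖ ≤ ∫ u, ‖φ u • fderiv ℝ px (y₀ - u)‖ :=
      norm_integral_le_integral_norm _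
    have hinteg : Integrable (fun u => ‖φ u • fderiv ℝ px (y₀ - u)‖) := by
      refine ((hG_int y₀).norm).congr (Filter.Eventually.of_forall fun u => ?_)
      simp only [norm_smul, hnorm_fderiv]
    have h2 : (∫ u, ‖φ u • fderiv ℝ px (y₀ - u)‖)
        ≤ ∫ u, C * (φ u * px (y₀ - u)) := by
      refine integral_mono hinteg ((hF_int y₀).const_mul C) fun u => ?_
      rw [norm_smul, Real.norm_of_nonneg (hφ_pos u).le, hnorm_fderiv]
      calc φ u * ‖gradient px (y₀ - u)‖
          ≤ φ u * (C * px (y₀ - u)) :=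
            mul_le_mul_of_nonneg_left (hgrad_bound _) (hφ_pos u).le
        _ = C * (φ u * px (y₀ - u)) := by ring
    have h3 : (∫ u, C * (φ u * px (y₀ - u))) = C * pt y₀ := by
      rw [integral_const_mul, ← hpt' y₀]
    linarith
  -- gradient of log pt
  have hptfd : HasFDerivAt (fun z => Real.log (pt z)) ((pt y₀)⁻¹ • D) y₀ :=
    (Real.hasDerivAt_log (hpt_pos y₀).ne').comp_hasFDerivAt y₀ key'
  have hgpt : gradient (fun z => Real.log (pt z)) y₀
      = (pt y₀)⁻¹ • (toDual ℝ (EuclideanSpace ℝ (Fin k))).symm D := by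
    rw [hptfd.hasGradientAt.gradient]
    simp
  rw [hgpt, norm_smul, Real.norm_of_nonneg (inv_nonneg.mpr (hpt_pos y₀).le),
    LinearIsometryEquiv.norm_map]
  calc (pt y₀)⁻¹ * ‖D‖ ≤ (pt y₀)⁻¹ * (C * pt y₀) :=
        mul_le_mul_of_nonneg_left hDnorm (inv_nonneg.mpr (hpt_pos y₀).le)
    _ = C := by
        rw [mul_comm C (pt y₀), ← mul_assoc, inv_mul_cancel₀ (hpt_pos y₀).ne', one_mul]
end

section
/- With M = I − μ Σ_x̃⁻¹ where Σ_x̃ is symmetric positive definite with spectral norm ‖M‖ < 1, the fixed-point covariance Σ* = (I − M²)⁻¹(σ² M² + (2μ − σ²) I) can be rewritten as Σ* = −σ² I + Σ_x̃ (I − (μ/2) Σ_x̃⁻¹)⁻¹, provided I − (μ/2) Σ_x̃⁻¹ is invertible. -/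
open scoped Matrix.Norms.L2Operator Ring

/-!
With `A = Σ⁻¹` and `C = 1 - (μ/2) A` one has `1 - M² = 2μ A C`, and the numerator equals
`2μ - σ² (1 - M²)`. Hence the quotient is `-σ² + 2μ (1 - M²)⁻¹ = -σ² + C⁻¹ Σ`, and `C⁻¹` commutes
with `Σ`. Only invertibility enters, so the identity holds in any algebra over a field in which
`2 ≠ 0`.
-/

section

variable {𝕜 R : Type*} [Field 𝕜] [NeZero (2 : 𝕜)] [Ring R] [Algebra 𝕜 R]

theorem one_sub_sq_one_sub_smul (μ : 𝕜) (a : R) :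
    1 - (1 - μ • a) ^ 2 = (2 * μ) • (a * (1 - (μ / 2) • a)) := by
  rw [sq]
  simp only [mul_sub, sub_mul, mul_one, one_mul, mul_smul_comm, smul_mul_assoc]
  match_scalars <;> field_simp <;> ring

theorem ringInverse_one_sub_sq_mul_smul_sq_add_smul_one {μ : 𝕜} (σ : 𝕜) {s : R} (hμ : μ ≠ 0)
    (hs : IsUnit s) (hc : IsUnit (1 - (μ / 2) • s⁻¹ʳ)) :
    (1 - (1 - μ • s⁻¹ʳ) ^ 2)⁻¹ʳ * (σ • (1 - μ • s⁻¹ʳ) ^ 2 + (2 * μ - σ) • 1)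
      = (-σ) • 1 + s * (1 - (μ / 2) • s⁻¹ʳ)⁻¹ʳ := by
  set c := 1 - (μ / 2) • s⁻¹ʳ
  set u := 1 - (1 - μ • s⁻¹ʳ) ^ 2
  have hu : u = (2 * μ) • (s⁻¹ʳ * c) := one_sub_sq_one_sub_smul μ s⁻¹ʳ
  have hs_comm : Commute s s⁻¹ʳ :=
    (Ring.mul_inverse_cancel s hs).trans (Ring.inverse_mul_cancel s hs).symm
  have hsc : Commute s c := (Commute.one_right s).sub_right (hs_comm.smul_right _)
  have hu_mul : u * (s * c⁻¹ʳ) = (2 * μ) • 1 := by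
    rw [hu, smul_mul_assoc, mul_assoc, ← mul_assoc c, ← hsc.eq, mul_assoc, ← mul_assoc,
      Ring.inverse_mul_cancel s hs, one_mul, Ring.mul_inverse_cancel c hc]
  have hu_unit : IsUnit u := by
    rw [hu]
    exact (isUnit_smul_iff (Units.mk0 _ (mul_ne_zero two_ne_zero hμ)) _).mpr
      ((isUnit_ringInverse.mpr hs).mul hc)
  have hnum : σ • (1 - μ • s⁻¹ʳ) ^ 2 + (2 * μ - σ) • 1 = u * ((-σ) • 1 + s * c⁻¹ʳ) := by
    rw [mul_add, hu_mul, mul_smul_comm, mul_one]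
    module
  rw [hnum, Ring.inverse_mul_cancel_left u _ hu_unit]

end

theorem fixed_point_covariance_rewrite_general (k : ℕ)
    (Sxt : Matrix (Fin k) (Fin k) ℝ) (hS : Sxt.PosDef)
    (μ σsq : ℝ) (hμ : 0 < μ)
    (M : Matrix (Fin k) (Fin k) ℝ) (hM : M = 1 - μ • Sxt⁻¹)
    (hinv : IsUnit (1 - (μ / 2) • Sxt⁻¹)) :
    (1 - M ^ 2)⁻¹ * (σsq • M ^ 2 + (2 * μ - σsq) • 1)
      = (-σsq) • 1 + Sxt * (1 - (μ / 2) • Sxt⁻¹)⁻¹ := by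
  subst hM
  simp only [Matrix.nonsing_inv_eq_ringInverse] at hinv ⊢
  exact ringInverse_one_sub_sq_mul_smul_sq_add_smul_one σsq hμ.ne' hS.isUnit hinv

/-- Rewriting of the fixed-point covariance:
(I−M²)⁻¹(σ²M² + (2μ−σ²)I) = −σ²I + Σ_x̃(I − (μ/2)Σ_x̃⁻¹)⁻¹. -/
theorem fixed_point_covariance_rewrite (k : ℕ)
    (Sxt : Matrix (Fin k) (Fin k) ℝ) (hS : Sxt.PosDef)
    (μ σsq : ℝ) (hμ : 0 < μ) (hσ : 0 < σsq)
    (M : Matrix (Fin k) (Fin k) ℝ) (hM : M = 1 - μ • Sxt⁻¹)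
    (hnorm : ‖M‖ < 1)
    (hinv : IsUnit (1 - (μ / 2) • Sxt⁻¹)) :
    (1 - M ^ 2)⁻¹ * (σsq • M ^ 2 + (2 * μ - σsq) • 1)
      = (-σsq) • 1 + Sxt * (1 - (μ / 2) • Sxt⁻¹)⁻¹ :=
  fixed_point_covariance_rewrite_general k Sxt hS μ σsq hμ M hM hinv
end

section
/- If Σ_x is symmetric positive definite and Σ_x̃ = Σ_x + σ² I with σ² = 2μ, then the fixed-point covariance Σ* = −σ² I + Σ_x̃ (I − (μ/2) Σ_x̃⁻¹)⁻¹ satisfies Σ* = Σ_x + (μ/2) I + O(μ²), i.e., ‖Σ* − Σ_x − (μ/2) I‖ ≤ C μ² for some constant C depending only on Σ_x, for all sufficiently small μ > 0. -/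
open scoped Matrix.Norms.L2Operator

/-!
With `C = Σ_x + (3μ/2) I` one has `Σ_x̃ = C + (μ/2) I` and `I - (μ/2) Σ_x̃⁻¹ = Σ_x̃⁻¹ C`, so
`Σ* = -2μ I + Σ_x̃ C⁻¹ Σ_x̃`, and expanding `(C + (μ/2) I) C⁻¹ (C + (μ/2) I)` gives the exact formula
`Σ* - Σ_x - (μ/2) I = (μ²/4) C⁻¹`. Since `Σ_x` is invertible and matrix inversion is continuous
there, `C⁻¹` stays bounded as `μ → 0`.
-/

open Matrix Asymptotics Filter Topology

namespace Matrix

variable {n R : Type*} [Fintype n] [DecidableEq n] [CommRing R]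

theorem inv_one_sub_smul_inv {A : Matrix n n R} (hA : IsUnit A.det) (c : R) :
    (1 - c • A⁻¹)⁻¹ = (A - c • 1)⁻¹ * A := by
  have hfactor : 1 - c • A⁻¹ = A⁻¹ * (A - c • 1) := by
    rw [mul_sub, Matrix.mul_smul, mul_one, nonsing_inv_mul A hA]
  rw [hfactor, mul_inv_rev, nonsing_inv_nonsing_inv A hA]

theorem add_smul_one_mul_inv_one_sub_smul_inv {C : Matrix n n R} {c : R} (hC : IsUnit C.det)
    (hCc : IsUnit (C + c • 1).det) :
    (C + c • 1) * (1 - c • (C + c • 1)⁻¹)⁻¹ = C + (2 * c) • 1 + c ^ 2 • C⁻¹ := by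
  rw [inv_one_sub_smul_inv hCc, add_sub_cancel_right, ← Matrix.mul_assoc]
  simp only [add_mul, mul_add, Matrix.smul_mul, Matrix.mul_smul, one_mul, mul_one,
    mul_nonsing_inv C hC, nonsing_inv_mul C hC, smul_smul]
  module

theorem PosDef.isUnit_det_add_smul_one {S : Matrix n n ℝ} (hS : S.PosDef) {t : ℝ}
    (ht : 0 ≤ t) : IsUnit (S + t • 1).det :=
  (isUnit_iff_isUnit_det _).mp (hS.add_posSemidef (PosSemidef.one.smul ht)).isUnit

theorem isBigO_inv_add_smul_one {A : Matrix n n ℝ} (hA : IsUnit A.det) :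
    (fun t : ℝ => (A + t • 1)⁻¹) =O[𝓝 0] fun _ => (1 : ℝ) := by
  have hinv : ContinuousAt Inv.inv A :=
    continuousAt_matrix_inv A (NormedRing.inverse_continuousAt hA.unit)
  have hshift : ContinuousAt (fun t : ℝ => A + t • 1) 0 := by fun_prop
  exact (hinv.comp_of_eq hshift (by simp)).tendsto.isBigO_one ℝ

end Matrix

theorem exists_pos_bound_of_isBigO_nhdsGT {E F : Type*} [Norm E] [SeminormedAddCommGroup F]
    {f : ℝ → E} {g : ℝ → F} (h : f =O[𝓝[>] 0] g) :
    ∃ C > 0, ∃ δ > 0, ∀ x, 0 < x → x < δ → ‖f x‖ ≤ C * ‖g x‖ := by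
  obtain ⟨C, hC, hfg⟩ := h.exists_pos
  obtain ⟨δ, hδ, hsub⟩ := mem_nhdsGT_iff_exists_Ioo_subset.mp hfg.bound
  exact ⟨C, hC, δ, hδ, fun x hx hxδ => hsub ⟨hx, hxδ⟩⟩

section StationaryCov

variable {n : Type*} [Fintype n] [DecidableEq n]

/-- The paper's `Σ*` for target covariance `S = Σ_x`, with `σ² = 2μ` and `Σ_x̃ = S + σ² I`. -/
noncomputable def stationaryCov (S : Matrix n n ℝ) (μ : ℝ) : Matrix n n ℝ :=
  (-(2 * μ)) • 1 + (S + (2 * μ) • 1) * (1 - (μ / 2) • (S + (2 * μ) • 1)⁻¹)⁻¹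

theorem stationaryCov_sub_eq {S : Matrix n n ℝ} (hS : S.PosDef) {μ : ℝ} (hμ : 0 ≤ μ) :
    stationaryCov S μ - S - (μ / 2) • 1 = (μ ^ 2 / 4) • (S + (3 * μ / 2) • 1)⁻¹ := by
  have hshift : S + (2 * μ) • 1 = (S + (3 * μ / 2) • 1) + (μ / 2) • 1 := by module
  rw [stationaryCov, hshift, add_smul_one_mul_inv_one_sub_smul_inv
    (hS.isUnit_det_add_smul_one (by positivity))
    (hshift ▸ hS.isUnit_det_add_smul_one (by positivity))]
  module

theorem stationaryCov_sub_isBigO {S : Matrix n n ℝ} (hS : S.PosDef) :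
    (fun μ => stationaryCov S μ - S - (μ / 2) • 1) =O[𝓝[>] 0] fun μ => μ ^ 2 := by
  have hinv : (fun μ : ℝ => (S + (3 * μ / 2) • 1)⁻¹) =O[𝓝 0] fun _ => (1 : ℝ) :=
    (isBigO_inv_add_smul_one ((isUnit_iff_isUnit_det S).mp hS.isUnit)).comp_tendsto
      (by simpa using (by fun_prop : Continuous fun μ : ℝ => 3 * μ / 2).tendsto 0)
  have hsq : (fun μ : ℝ => μ ^ 2 / 4) =O[𝓝 0] fun μ => μ ^ 2 :=
    (isBigO_const_mul_self 4⁻¹ _ _).congr_left fun μ => by ring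
  refine ((hsq.smul hinv).mono nhdsWithin_le_nhds).congr' ?_ (by simp)
  filter_upwards [self_mem_nhdsWithin] with μ hμ
  exact (stationaryCov_sub_eq hS (hμ.le)).symm

end StationaryCov

/-- Bias of the noise-corrected Langevin algorithm in the Gaussian case with σ² = 2μ:
Σ* = Σ_x + (μ/2)I + O(μ²). -/
theorem noise_corrected_gaussian_bias (k : ℕ)
    (Sx : Matrix (Fin k) (Fin k) ℝ) (hS : Sx.PosDef) :
    ∃ C > 0, ∃ μ₀ > 0, ∀ μ : ℝ, 0 < μ → μ < μ₀ →
      ‖((-(2 * μ)) • (1 : Matrix (Fin k) (Fin k) ℝ) +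
          (Sx + (2 * μ) • 1) * (1 - (μ / 2) • (Sx + (2 * μ) • 1)⁻¹)⁻¹)
        - Sx - (μ / 2) • 1‖ ≤ C * μ ^ 2 := by
  obtain ⟨C, hC, μ₀, hμ₀, hbound⟩ :=
    exists_pos_bound_of_isBigO_nhdsGT (stationaryCov_sub_isBigO hS)
  refine ⟨C, hC, μ₀, hμ₀, fun μ hμ hμμ₀ => ?_⟩
  have := hbound μ hμ hμμ₀
  rwa [norm_pow, Real.norm_eq_abs, sq_abs] at this
end

section
/- If Σ_x is symmetric positive definite, Σ_x̃ = Σ_x + σ² I, and the ordinary (uncorrected) Langevin iteration with the noisy score is run (i.e., the fixed point is Σ* = Σ_x̃ (I − (μ/2) Σ_x̃⁻¹)⁻¹), then with step size μ = σ²/2 the leading-order bias satisfies Σ* = Σ_x + (5μ/2) I + O(μ²), exactly five times the bias of the noise-corrected algorithm. -/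
/-!
With `S̃ = S + 2μ` and `B = (1 - (μ/2) S̃⁻¹)⁻¹`, the relation `S̃ = (S̃ - μ/2) B` gives
`S̃ B = S̃ + (μ/2) B` and `B - 1 = (μ/2) S̃⁻¹ B`, so the bias is exactly
`S̃ B - S - (5μ/2) = (μ/2)(B - 1) = (μ²/4) S̃⁻¹ B`. Since inversion is continuous at units,
`S̃⁻¹ B` tends to `S⁻¹` as `μ → 0` and is therefore bounded.
-/

open scoped Matrix.Norms.L2Operator Ring
open Filter Topology Asymptotics

theorem Ring.mul_inverse_one_sub_smul_inverse_sub {𝕜 R : Type*} [CommRing 𝕜] [Ring R]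
    [Algebra 𝕜 R] {a : R} (ha : IsUnit a) (c : 𝕜) (hb : IsUnit (1 - c • a⁻¹ʳ)) :
    a * (1 - c • a⁻¹ʳ)⁻¹ʳ - a - c • 1 = c ^ 2 • (a⁻¹ʳ * (1 - c • a⁻¹ʳ)⁻¹ʳ) := by
  set b := (1 - c • a⁻¹ʳ)⁻¹ʳ
  have hb_inv : (1 - c • a⁻¹ʳ) * b = 1 := Ring.mul_inverse_cancel _ hb
  have hab : a * b = a + c • b := by
    calc a * b = (a * (1 - c • a⁻¹ʳ) + c • 1) * b := by
          rw [mul_sub, mul_one, mul_smul_comm, Ring.mul_inverse_cancel _ ha, sub_add_cancel]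
      _ = a + c • b := by rw [add_mul, mul_assoc, hb_inv, mul_one, smul_mul_assoc, one_mul]
  have hb_sub_one : b - 1 = c • (a⁻¹ʳ * b) := by
    calc b - 1 = (1 - (1 - c • a⁻¹ʳ)) * b := by rw [sub_mul, one_mul, hb_inv]
      _ = c • (a⁻¹ʳ * b) := by rw [sub_sub_cancel, smul_mul_assoc]
  rw [hab, add_sub_cancel_left, ← smul_sub, hb_sub_one, smul_smul, sq]

theorem Asymptotics.isBigO_nhds_iff {α E F : Type*} [PseudoMetricSpace α]
    [SeminormedAddCommGroup E] [SeminormedAddCommGroup F] {f : α → E} {g : α → F} {x₀ : α} :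
    f =O[𝓝 x₀] g ↔ ∃ C > 0, ∃ δ > 0, ∀ x, dist x x₀ < δ → ‖f x‖ ≤ C * ‖g x‖ := by
  simp only [isBigO_iff', Metric.eventually_nhds_iff]

/-- The fixed point `S̃ (1 - (μ/2) S̃⁻¹)⁻¹` of `Σ ↦ M Σ M + 2μ`, `M = 1 - μ S̃⁻¹`, where
`S̃ = S + 2μ` is the covariance of the noisy data when the noise variance is `σ² = 2μ`. -/
noncomputable def misspecifiedLangevinCov {R : Type*} [Ring R] [Algebra ℝ R] (S : R) (μ : ℝ) :
    R :=
  (S + (2 * μ) • 1) * (1 - (μ / 2) • (S + (2 * μ) • 1)⁻¹ʳ)⁻¹ʳ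

theorem misspecifiedLangevinCov_sub_isBigO {R : Type*} [NormedRing R] [NormedAlgebra ℝ R]
    [HasSummableGeomSeries R] {S : R} (hS : IsUnit S) :
    (fun μ => misspecifiedLangevinCov S μ - S - (5 * μ / 2) • 1) =O[𝓝 0] fun μ => μ ^ 2 := by
  set A : ℝ → R := fun μ => S + (2 * μ) • 1
  set V : ℝ → R := fun μ => 1 - (μ / 2) • (A μ)⁻¹ʳ
  have hA : ContinuousAt A 0 := by fun_prop
  have hA_inv : ContinuousAt (fun μ => (A μ)⁻¹ʳ) 0 :=
    (NormedRing.inverse_continuousAt hS.unit).comp_of_eq hA (by simp [A])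
  have hV : ContinuousAt V 0 := by fun_prop
  have hV_inv : ContinuousAt (fun μ => (V μ)⁻¹ʳ) 0 :=
    (NormedRing.inverse_continuousAt 1).comp_of_eq hV (by simp [V])
  have hA_unit : ∀ᶠ μ in 𝓝 0, IsUnit (A μ) :=
    hA.eventually_mem (by simpa [A] using Units.nhds hS.unit)
  have hV_unit : ∀ᶠ μ in 𝓝 0, IsUnit (V μ) :=
    hV.eventually_mem (by simpa [V] using Units.nhds 1)
  have hbias : (fun μ => misspecifiedLangevinCov S μ - S - (5 * μ / 2) • 1) =ᶠ[𝓝 0]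
      fun μ => (μ / 2) ^ 2 • ((A μ)⁻¹ʳ * (V μ)⁻¹ʳ) := by
    filter_upwards [hA_unit, hV_unit] with μ hAμ hVμ
    rw [← Ring.mul_inverse_one_sub_smul_inverse_sub hAμ _ hVμ]
    simp only [misspecifiedLangevinCov, A]
    module
  have hquarter : (fun μ : ℝ => (μ / 2) ^ 2) =O[𝓝 0] fun μ => μ ^ 2 :=
    isBigO_of_le _ fun μ => by
      rw [div_pow, norm_div, norm_pow]; norm_num; linarith [sq_nonneg μ]
  refine hbias.trans_isBigO ?_
  simpa using hquarter.smul ((hA_inv.mul hV_inv).tendsto.isBigO_one ℝ)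

/-- Bias of the misspecified ordinary Langevin algorithm (noisy score, σ² = 2μ):
Σ* = Σ_x + (5μ/2)I + O(μ²), five times the bias of the noise-corrected algorithm. -/
theorem misspecified_langevin_gaussian_bias (k : ℕ)
    (Sx : Matrix (Fin k) (Fin k) ℝ) (hS : Sx.PosDef) :
    ∃ C > 0, ∃ μ₀ > 0, ∀ μ : ℝ, 0 < μ → μ < μ₀ →
      ‖(Sx + (2 * μ) • 1) * (1 - (μ / 2) • (Sx + (2 * μ) • (1 : Matrix (Fin k) (Fin k) ℝ))⁻¹)⁻¹
          - Sx - (5 * μ / 2) • 1‖ ≤ C * μ ^ 2 := by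
  obtain ⟨C, hC, μ₀, hμ₀, hbound⟩ :=
    isBigO_nhds_iff.mp (misspecifiedLangevinCov_sub_isBigO hS.isUnit)
  refine ⟨C, hC, μ₀, hμ₀, fun μ hμ hμμ₀ => ?_⟩
  have := hbound μ (by simpa [Real.dist_eq, abs_of_pos hμ] using hμμ₀)
  simpa [misspecifiedLangevinCov, Matrix.nonsing_inv_eq_ringInverse] using this
end

section
/- For the Oracle Langevin iteration in the Gaussian case (score given by the true inverse covariance Σ_x⁻¹, no noise added to data), the stationary covariance is Σ* = Σ_x (I − (μ/2) Σ_x⁻¹)⁻¹ = Σ_x + (μ/2) I + O(μ²), matching the bias of the noise-corrected algorithm up to O(μ²). -/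
/-!
Write `A = Σ_x⁻¹`, `M = 1 - μ A` and `B = 1 - (μ/2) A`, so that `Σ* = Σ_x B⁻¹`.
The matrices `Σ_x`, `A`, `B`, `B⁻¹` all commute and `Σ* A = B⁻¹`; so
`M Σ* M = Σ* M² = Σ* - 2μ B⁻¹ (1 - (μ/2) A) = Σ* - 2μ`, the fixed point equation.
For the bias, `Σ* - Σ_x = (μ/2) B⁻¹` and `B⁻¹ - 1 = (μ/2) A B⁻¹` give
`Σ* - Σ_x - (μ/2) I = (μ/2)² A B⁻¹`, and `X = A B⁻¹` solves `X = A + (μ/2) A X`, so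
`‖X‖ ≤ 2 ‖A‖` once `μ ‖A‖ ≤ 1`.
-/

open scoped Matrix.Norms.L2Operator

theorem norm_le_two_mul_of_eq_add_mul {R : Type*} [NonUnitalSeminormedRing R] {x y z : R}
    (hx : x = y + z * x) (hz : ‖z‖ ≤ 1 / 2) : ‖x‖ ≤ 2 * ‖y‖ := by
  have : ‖x‖ ≤ ‖y‖ + ‖z‖ * ‖x‖ :=
    calc ‖x‖ = ‖y + z * x‖ := by rw [← hx]
      _ ≤ ‖y‖ + ‖z‖ * ‖x‖ := (norm_add_le _ _).trans (by gcongr; exact norm_mul_le _ _)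
  nlinarith [norm_nonneg x]

section LangevinFixedPoint

variable {𝕜 R : Type*} [Field 𝕜] [Ring R] [Algebra 𝕜 R] {μ : 𝕜} {s u : Rˣ}

theorem commute_inv_val_of_val_eq (hu : (u : R) = 1 - (μ / 2) • (↑s⁻¹ : R)) :
    Commute (↑s⁻¹ : R) u :=
  hu ▸ (Commute.one_right _).sub_right ((Commute.refl _).smul_right _)

theorem commute_inv_mul_inv_of_val_eq (hu : (u : R) = 1 - (μ / 2) • (↑s⁻¹ : R)) :
    Commute (↑s⁻¹ : R) (s * ↑u⁻¹) :=
  (Commute.units_inv_left (Commute.refl (s : R))).mul_right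
    (commute_inv_val_of_val_eq hu).units_inv_right

theorem mul_inv_mul_inv_of_val_eq (hu : (u : R) = 1 - (μ / 2) • (↑s⁻¹ : R)) :
    (s * ↑u⁻¹ : R) * ↑s⁻¹ = ↑u⁻¹ := by
  rw [← (commute_inv_mul_inv_of_val_eq hu).eq, ← mul_assoc, Units.inv_mul, one_mul]

theorem langevin_fixed_point [CharZero 𝕜] (hu : (u : R) = 1 - (μ / 2) • (↑s⁻¹ : R)) :
    (1 - μ • (↑s⁻¹ : R)) * (s * ↑u⁻¹) * (1 - μ • ↑s⁻¹) + (2 * μ) • 1 = s * ↑u⁻¹ := by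
  set a : R := ↑s⁻¹
  set S : R := s * ↑u⁻¹
  have hM : Commute (1 - μ • a) S :=
    (Commute.one_left _).sub_left ((commute_inv_mul_inv_of_val_eq hu).smul_left _)
  have hSa : S * a = ↑u⁻¹ := mul_inv_mul_inv_of_val_eq hu
  have hinv : (↑u⁻¹ : R) * (1 - (μ / 2) • a) = 1 := hu ▸ u.inv_mul
  calc (1 - μ • a) * S * (1 - μ • a) + (2 * μ) • 1
      = S - (2 * μ) • (S * a) + (μ ^ 2) • (S * a * a) + (2 * μ) • 1 := by
        rw [hM.eq, mul_assoc]
        simp only [mul_sub, sub_mul, mul_one, one_mul, mul_smul_comm, smul_mul_assoc,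
          mul_assoc]
        module
    _ = S - (2 * μ) • (↑u⁻¹ * (1 - (μ / 2) • a)) + (2 * μ) • 1 := by
        rw [hSa]
        simp only [mul_sub, mul_one, mul_smul_comm, smul_sub, smul_smul]
        module
    _ = S := by rw [hinv]; abel

theorem langevin_bias_eq (hu : (u : R) = 1 - (μ / 2) • (↑s⁻¹ : R)) :
    (s * ↑u⁻¹ : R) - s - (μ / 2) • 1 = (μ / 2) ^ 2 • ((↑s⁻¹ : R) * ↑u⁻¹) := by
  set a : R := ↑s⁻¹
  have h1u : 1 - (u : R) = (μ / 2) • a := by rw [hu]; abel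
  have hS : (s * ↑u⁻¹ : R) - s = (μ / 2) • ↑u⁻¹ :=
    calc (s * ↑u⁻¹ : R) - s = s * ↑u⁻¹ * (1 - u) := by
          rw [mul_sub, mul_one, mul_assoc, u.inv_mul, mul_one]
      _ = (μ / 2) • ↑u⁻¹ := by rw [h1u, mul_smul_comm, mul_inv_mul_inv_of_val_eq hu]
  have hinv : (↑u⁻¹ : R) - 1 = (μ / 2) • (a * ↑u⁻¹) :=
    calc (↑u⁻¹ : R) - 1 = ↑u⁻¹ * (1 - u) := by rw [mul_sub, mul_one, u.inv_mul]
      _ = (μ / 2) • (a * ↑u⁻¹) := by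
          rw [h1u, mul_smul_comm, (commute_inv_val_of_val_eq hu).units_inv_right.eq]
  rw [hS, ← smul_sub, hinv, smul_smul, sq]

end LangevinFixedPoint

section LangevinBias

variable {R : Type*} [NormedRing R] [NormedAlgebra ℝ R] {μ : ℝ} {s u : Rˣ}

theorem norm_inv_mul_inv_le (hu : (u : R) = 1 - (μ / 2) • (↑s⁻¹ : R)) (hμ : 0 ≤ μ)
    (hμs : μ * ‖(↑s⁻¹ : R)‖ ≤ 1) : ‖(↑s⁻¹ : R) * ↑u⁻¹‖ ≤ 2 * ‖(↑s⁻¹ : R)‖ := by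
  set a : R := ↑s⁻¹
  refine norm_le_two_mul_of_eq_add_mul (z := (μ / 2) • a) (eq_add_of_sub_eq ?_) ?_
  · calc a * ↑u⁻¹ - ((μ / 2) • a) * (a * ↑u⁻¹) = a * u * ↑u⁻¹ := by
          rw [hu]; simp only [mul_sub, sub_mul, mul_one, smul_mul_assoc, mul_smul_comm, mul_assoc]
      _ = a := by rw [mul_assoc, u.mul_inv, mul_one]
  · rw [norm_smul, Real.norm_of_nonneg (by positivity)]
    linarith

theorem langevin_bias_norm_le (hu : (u : R) = 1 - (μ / 2) • (↑s⁻¹ : R)) (hμ : 0 ≤ μ)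
    (hμs : μ * ‖(↑s⁻¹ : R)‖ ≤ 1) :
    ‖(s * ↑u⁻¹ : R) - s - (μ / 2) • 1‖ ≤ ‖(↑s⁻¹ : R)‖ / 2 * μ ^ 2 := by
  rw [langevin_bias_eq hu, norm_smul, Real.norm_of_nonneg (by positivity)]
  calc (μ / 2) ^ 2 * ‖(↑s⁻¹ : R) * ↑u⁻¹‖ ≤ (μ / 2) ^ 2 * (2 * ‖(↑s⁻¹ : R)‖) := by
        gcongr; exact norm_inv_mul_inv_le hu hμ hμs
    _ = ‖(↑s⁻¹ : R)‖ / 2 * μ ^ 2 := by ring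

end LangevinBias

/-- Oracle Langevin in the Gaussian case: the stationary covariance is
Σ_x(I − (μ/2)Σ_x⁻¹)⁻¹ and equals Σ_x + (μ/2)I + O(μ²). -/
theorem oracle_langevin_gaussian_bias (k : ℕ)
    (Sx : Matrix (Fin k) (Fin k) ℝ) (hS : Sx.PosDef) :
    ∃ C > 0, ∃ μ₀ > 0, ∀ μ : ℝ, 0 < μ → μ < μ₀ →
      ((1 - μ • Sx⁻¹) * (Sx * (1 - (μ / 2) • Sx⁻¹)⁻¹) * (1 - μ • Sx⁻¹)
          + (2 * μ) • 1 = Sx * (1 - (μ / 2) • Sx⁻¹)⁻¹) ∧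
      ‖Sx * (1 - (μ / 2) • Sx⁻¹)⁻¹ - Sx - (μ / 2) • 1‖ ≤ C * μ ^ 2 := by
  obtain ⟨s, rfl⟩ := hS.isUnit
  rw [← Matrix.coe_units_inv]
  set κ := ‖(↑s⁻¹ : Matrix (Fin k) (Fin k) ℝ)‖
  refine ⟨κ / 2 + 1, by positivity, 1 / (κ + 1), by positivity, fun μ hμ hμ₀ => ?_⟩
  have hμκ : μ * κ < 1 := by
    rw [lt_div_iff₀ (by positivity)] at hμ₀
    nlinarith [norm_nonneg (↑s⁻¹ : Matrix (Fin k) (Fin k) ℝ)]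
  have hsmall : ‖(μ / 2) • (↑s⁻¹ : Matrix (Fin k) (Fin k) ℝ)‖ < 1 := by
    rw [norm_smul, Real.norm_of_nonneg (by positivity)]
    linarith
  obtain ⟨u, hu⟩ : ∃ u : (Matrix (Fin k) (Fin k) ℝ)ˣ,
      (u : Matrix (Fin k) (Fin k) ℝ) = 1 - (μ / 2) • (↑s⁻¹ : Matrix (Fin k) (Fin k) ℝ) :=
    ⟨Units.oneSub _ hsmall, Units.val_oneSub _ hsmall⟩
  rw [← hu, ← Matrix.coe_units_inv]
  refine ⟨langevin_fixed_point hu, (langevin_bias_norm_le hu hμ.le hμκ.le).trans ?_⟩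
  gcongr
  linarith
end
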